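/- arXiv:2410.16988 — 3 statements merged into one kernel-verified Lean document; each statement's English description precedes it below -/
import Mathlib

section
/- Let F be a metrizable topological space with its Borel σ-algebra and let (S_t)_{t>0} be a family of Markov kernels on F that is strong Feller, i.e. for every t > 0 and every bounded Borel measurable g : F → ℝ the function x ↦ S_t g(x) := ∫ g(z) S_t(x,dz) is continuous on F. Let c, f : F → [0,∞) be bounded Borel measurable functions, and let k : [0,∞) × F → ℝ, (t,x) ↦ k_t(x), be a jointly measurable function with 0 ≤ k_t(x) ≤ sup f for all t, x, satisfying the Feynman–Kac integral equation k_t(x) = S_t f(x) − ∫₀ᵗ S_s(c · k_{t−s})(x) ds for every t ≥ 0 and x ∈ F (the map s ↦ S_s(c · k_{t−s})(x) being integrable on [0,t] for each x). Then for every t > 0 the function x ↦ k_t(x) is continuous on F. (This is Lemma 2.1(i): the strong Feller property of a transition function is preserved by killing with the multiplicative functional induced by c.) -/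
open MeasureTheory ProbabilityTheory
open scoped Interval

/-!
For each `s ∈ (0, t]` the strong Feller property makes `x ↦ S_s(c · k_{t-s})(x)` continuous, and
these functions are bounded by `sup c · sup f` uniformly in `s`, since the `S_s` are Markov.
Dominated convergence in `s` (enough, as `F` is first countable) then makes the Duhamel term
`x ↦ ∫₀ᵗ S_s(c · k_{t-s})(x) ds` continuous, and `S_t f` is continuous by strong Feller again.
-/

theorem continuous_intervalIntegral_integral_of_strongFeller
    {F : Type*} [TopologicalSpace F] [FirstCountableTopology F] [MeasurableSpace F]
    (S : ℝ → Kernel F F) (hMarkov : ∀ s : ℝ, 0 ≤ s → IsMarkovKernel (S s))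
    (hSF : ∀ s : ℝ, 0 < s → ∀ g : F → ℝ, Measurable g → (∃ M, ∀ x, |g x| ≤ M) →
      Continuous fun x => ∫ z, g z ∂(S s x))
    {t : ℝ} (ht : 0 ≤ t) (g : ℝ → F → ℝ) (hg : ∀ s, Measurable (g s)) {C : ℝ}
    (hC : ∀ s z, |g s z| ≤ C)
    (hint : ∀ x, IntervalIntegrable (fun s => ∫ z, g s z ∂(S s x)) volume 0 t) :
    Continuous fun x => ∫ s in (0 : ℝ)..t, ∫ z, g s z ∂(S s x) := by
  have hpos : ∀ s ∈ Ι 0 t, 0 < s := fun s hs => (Set.uIoc_of_le ht ▸ hs).1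
  have hbound : ∀ x, ∀ s ∈ Ι 0 t, ‖∫ z, g s z ∂(S s x)‖ ≤ C := fun x s hs => by
    have := hMarkov s (hpos s hs).le
    simpa using norm_integral_le_of_norm_le_const (μ := S s x)
      (ae_of_all _ fun z => (Real.norm_eq_abs _).trans_le (hC s z))
  exact intervalIntegral.continuous_of_dominated_interval (bound := fun _ => C)
    (fun x => (hint x).def'.aestronglyMeasurable) (fun x => ae_of_all _ (hbound x))
    intervalIntegrable_const
    (ae_of_all _ fun s hs => hSF s (hpos s hs) (g s) (hg s) ⟨C, hC s⟩)

theorem strongFeller_preserved_by_killing_general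
    {F : Type*} [TopologicalSpace F] [TopologicalSpace.MetrizableSpace F]
    [MeasurableSpace F]
    (S : ℝ → Kernel F F)
    (hMarkov : ∀ t : ℝ, 0 ≤ t → IsMarkovKernel (S t))
    (hSF : ∀ t : ℝ, 0 < t → ∀ g : F → ℝ, Measurable g → (∃ M, ∀ x, |g x| ≤ M) →
      Continuous fun x => ∫ z, g z ∂(S t x))
    (c : F → ℝ) (hcmeas : Measurable c) (hc0 : ∀ x, 0 ≤ c x) (hcbdd : ∃ M, ∀ x, c x ≤ M)
    (f : F → ℝ) (hfmeas : Measurable f) (hf0 : ∀ x, 0 ≤ f x)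
    (hfbdd : BddAbove (Set.range f))
    (k : ℝ → F → ℝ)
    (hkmeas : Measurable fun p : ℝ × F => k p.1 p.2)
    (hk0 : ∀ t x, 0 ≤ k t x) (hkle : ∀ t x, k t x ≤ sSup (Set.range f))
    (hint : ∀ t : ℝ, 0 ≤ t → ∀ x : F,
      IntervalIntegrable (fun s => ∫ z, c z * k (t - s) z ∂(S s x)) volume 0 t)
    (heq : ∀ t : ℝ, 0 ≤ t → ∀ x : F,
      k t x = (∫ z, f z ∂(S t x)) - ∫ s in (0 : ℝ)..t, ∫ z, c z * k (t - s) z ∂(S s x)) :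
    ∀ t : ℝ, 0 < t → Continuous (k t) := by
  intro t ht
  obtain ⟨Mc, hMc⟩ := hcbdd
  set Mf := sSup (Set.range f)
  have hf_abs : ∀ x, |f x| ≤ Mf := fun x =>
    (abs_of_nonneg (hf0 x)).trans_le (le_csSup hfbdd ⟨x, rfl⟩)
  have hck_abs : ∀ s z, |c z * k (t - s) z| ≤ Mc * Mf := fun s z => by
    rw [abs_mul, abs_of_nonneg (hc0 z), abs_of_nonneg (hk0 _ z)]
    exact mul_le_mul (hMc z) (hkle _ z) (hk0 _ z) ((hc0 z).trans (hMc z))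
  have hck_meas : ∀ s, Measurable fun z => c z * k (t - s) z := fun s =>
    hcmeas.mul (hkmeas.comp (measurable_const.prodMk measurable_id))
  rw [show k t = _ from funext (heq t ht.le)]
  exact (hSF t ht f hfmeas ⟨Mf, hf_abs⟩).sub
    (continuous_intervalIntegral_integral_of_strongFeller S hMarkov hSF ht.le _ hck_meas
      hck_abs (hint t ht.le))

/-- Lemma 2.1(i): the strong Feller property of a transition function is
preserved by killing. Let `(S_t)` be a family of Markov kernels on a metrizable space `F`
(with its Borel σ-algebra) which is strong Feller: `x ↦ S_t g(x) = ∫ g dS_t(x,·)` is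
continuous for every `t > 0` and every bounded Borel measurable `g`. Let `c, f : F → [0,∞)`
be bounded Borel measurable, and let `k : [0,∞) × F → ℝ` be jointly measurable with
`0 ≤ k_t(x) ≤ sup f`, satisfying the Feynman–Kac integral equation
`k_t(x) = S_t f(x) − ∫₀ᵗ S_s(c · k_{t−s})(x) ds` for all `t ≥ 0`, `x ∈ F` (the integrand
being integrable on `[0,t]`). Then `k_t` is continuous on `F` for every `t > 0`. -/
theorem strongFeller_preserved_by_killing
    {F : Type*} [TopologicalSpace F] [TopologicalSpace.MetrizableSpace F]
    [MeasurableSpace F] [BorelSpace F]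
    (S : ℝ → Kernel F F)
    (hMarkov : ∀ t : ℝ, 0 ≤ t → IsMarkovKernel (S t))
    (hSF : ∀ t : ℝ, 0 < t → ∀ g : F → ℝ, Measurable g → (∃ M, ∀ x, |g x| ≤ M) →
      Continuous fun x => ∫ z, g z ∂(S t x))
    (c : F → ℝ) (hcmeas : Measurable c) (hc0 : ∀ x, 0 ≤ c x) (hcbdd : ∃ M, ∀ x, c x ≤ M)
    (f : F → ℝ) (hfmeas : Measurable f) (hf0 : ∀ x, 0 ≤ f x)
    (hfbdd : BddAbove (Set.range f))
    (k : ℝ → F → ℝ)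
    (hkmeas : Measurable fun p : ℝ × F => k p.1 p.2)
    (hk0 : ∀ t x, 0 ≤ k t x) (hkle : ∀ t x, k t x ≤ sSup (Set.range f))
    (hint : ∀ t : ℝ, 0 ≤ t → ∀ x : F,
      IntervalIntegrable (fun s => ∫ z, c z * k (t - s) z ∂(S s x)) volume 0 t)
    (heq : ∀ t : ℝ, 0 ≤ t → ∀ x : F,
      k t x = (∫ z, f z ∂(S t x)) - ∫ s in (0 : ℝ)..t, ∫ z, c z * k (t - s) z ∂(S s x)) :
    ∀ t : ℝ, 0 < t → Continuous (k t) :=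
  strongFeller_preserved_by_killing_general S hMarkov hSF c hcmeas hc0 hcbdd f hfmeas hf0 hfbdd k
    hkmeas hk0 hkle hint heq
end

section
/- Let F be a locally compact Hausdorff topological space with a countable base, equipped with its Borel σ-algebra, and let (S_t)_{t>0} be a family of Markov kernels on F that is strong Feller, i.e. for every t > 0 and every bounded Borel measurable g : F → ℝ the function x ↦ S_t g(x) := ∫ g(z) S_t(x,dz) is continuous on F. Assume in addition that (S_t)_{t>0} acts on continuous functions vanishing at infinity: for every t > 0, if g : F → ℝ is continuous and vanishes at infinity then so does S_t g. Let c : F → [0,∞) be bounded Borel measurable, let f : F → [0,∞) be continuous, bounded and vanishing at infinity, and let k : [0,∞) × F → ℝ be jointly measurable with 0 ≤ k_t(x) ≤ sup f, satisfying k_t(x) = S_t f(x) − ∫₀ᵗ S_s(c · k_{t−s})(x) ds for all t ≥ 0, x ∈ F (the map s ↦ S_s(c · k_{t−s})(x) being integrable on [0,t] for each x). Then for every t > 0 the function k_t is continuous on F and vanishes at infinity, i.e. k_t(x) → 0 along the cocompact filter on F. (This is Lemma 2.1(ii).) -/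
open Filter Topology MeasureTheory ProbabilityTheory

/-!
Write `I_t(x) = ∫₀ᵗ S_s(c · k_{t−s})(x) ds`, so that `k_t = S_t f − I_t`. By the strong Feller
property `S_t f` is continuous, and so is every `x ↦ S_s(c · k_{t−s})(x)` for `s > 0`; these are
bounded by `sup c · sup f` uniformly in `s` because the kernels are Markov, so `I_t` is continuous
by dominated convergence. Since `c, k ≥ 0` we have `I_t ≥ 0`, hence `0 ≤ k_t ≤ S_t f`, and `S_t f`
vanishes at infinity.
-/

lemma abs_integral_le_of_abs_le {α : Type*} [MeasurableSpace α] {μ : Measure α}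
    [IsProbabilityMeasure μ] {g : α → ℝ} {C : ℝ} (hg : ∀ z, |g z| ≤ C) :
    |∫ z, g z ∂μ| ≤ C := by
  simpa using norm_integral_le_of_norm_le_const (μ := μ)
    (Eventually.of_forall fun z => (Real.norm_eq_abs _).trans_le (hg z))

theorem continuous_intervalIntegral_integral_kernel
    {X : Type*} [TopologicalSpace X] [FirstCountableTopology X] [MeasurableSpace X]
    (S : ℝ → Kernel X X) (hMarkov : ∀ s : ℝ, 0 < s → IsMarkovKernel (S s))
    (hSF : ∀ s : ℝ, 0 < s → ∀ g : X → ℝ, Measurable g → (∃ M, ∀ x, |g x| ≤ M) →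
      Continuous fun x => ∫ z, g z ∂(S s x))
    {g : ℝ → X → ℝ} {C : ℝ} (hg_meas : ∀ s, Measurable (g s)) (hg_bdd : ∀ s z, |g s z| ≤ C)
    {t : ℝ} (ht : 0 ≤ t)
    (hint : ∀ x, IntervalIntegrable (fun s => ∫ z, g s z ∂(S s x)) volume 0 t) :
    Continuous fun x => ∫ s in 0..t, ∫ z, g s z ∂(S s x) := by
  have hIoc : Set.uIoc 0 t = Set.Ioc 0 t := Set.uIoc_of_le ht
  refine intervalIntegral.continuous_of_dominated_interval (bound := fun _ => C)
    (fun x => (hint x).def'.aestronglyMeasurable) (fun x => .of_forall fun s hs => ?_)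
    intervalIntegrable_const
    (.of_forall fun s hs => hSF s (hIoc ▸ hs).1 (g s) (hg_meas s) ⟨C, hg_bdd s⟩)
  have := hMarkov s (hIoc ▸ hs).1
  exact abs_integral_le_of_abs_le (hg_bdd s)

theorem strongFeller_C0_preserved_by_killing_general
    {F : Type*} [TopologicalSpace F]
    [SecondCountableTopology F]
    [MeasurableSpace F] [BorelSpace F]
    (S : ℝ → Kernel F F)
    (hMarkov : ∀ t : ℝ, 0 ≤ t → IsMarkovKernel (S t))
    (hSF : ∀ t : ℝ, 0 < t → ∀ g : F → ℝ, Measurable g → (∃ M, ∀ x, |g x| ≤ M) →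
      Continuous fun x => ∫ z, g z ∂(S t x))
    (hC0 : ∀ t : ℝ, 0 < t → ∀ g : F → ℝ, Continuous g →
      Tendsto g (cocompact F) (𝓝 0) →
      Tendsto (fun x => ∫ z, g z ∂(S t x)) (cocompact F) (𝓝 0))
    (c : F → ℝ) (hcmeas : Measurable c) (hc0 : ∀ x, 0 ≤ c x) (hcbdd : ∃ M, ∀ x, c x ≤ M)
    (f : F → ℝ) (hfcont : Continuous f) (hf0 : ∀ x, 0 ≤ f x)
    (hfbdd : BddAbove (Set.range f))
    (hfC0 : Tendsto f (cocompact F) (𝓝 0))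
    (k : ℝ → F → ℝ)
    (hkmeas : Measurable fun p : ℝ × F => k p.1 p.2)
    (hk0 : ∀ t x, 0 ≤ k t x) (hkle : ∀ t x, k t x ≤ sSup (Set.range f))
    (hint : ∀ t : ℝ, 0 ≤ t → ∀ x : F,
      IntervalIntegrable (fun s => ∫ z, c z * k (t - s) z ∂(S s x)) volume 0 t)
    (heq : ∀ t : ℝ, 0 ≤ t → ∀ x : F,
      k t x = (∫ z, f z ∂(S t x)) - ∫ s in (0 : ℝ)..t, ∫ z, c z * k (t - s) z ∂(S s x)) :
    ∀ t : ℝ, 0 < t → Continuous (k t) ∧ Tendsto (k t) (cocompact F) (𝓝 0) := by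
  intro t ht
  obtain ⟨M, hM⟩ := hcbdd
  have hf_bdd : ∀ x, |f x| ≤ sSup (Set.range f) := fun x => by
    rw [abs_of_nonneg (hf0 x)]
    exact le_csSup hfbdd ⟨x, rfl⟩
  have hck_bdd : ∀ u z, |c z * k u z| ≤ M * sSup (Set.range f) := fun u z => by
    rw [abs_of_nonneg (mul_nonneg (hc0 z) (hk0 u z))]
    exact mul_le_mul (hM z) (hkle u z) (hk0 u z) ((hc0 z).trans (hM z))
  have hk_meas : ∀ u, Measurable (k u) := fun u => hkmeas.comp measurable_prodMk_left
  have hkt : k t = fun x => (∫ z, f z ∂(S t x))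
      - ∫ s in (0 : ℝ)..t, ∫ z, c z * k (t - s) z ∂(S s x) := funext (heq t ht.le)
  have hk_le : ∀ x, k t x ≤ ∫ z, f z ∂(S t x) := fun x => by
    have hI : 0 ≤ ∫ s in (0 : ℝ)..t, ∫ z, c z * k (t - s) z ∂(S s x) :=
      intervalIntegral.integral_nonneg ht.le fun s _ =>
        integral_nonneg fun z => mul_nonneg (hc0 z) (hk0 _ z)
    rw [heq t ht.le x]
    linarith
  refine ⟨?_, tendsto_of_tendsto_of_tendsto_of_le_of_le tendsto_const_nhds
    (hC0 t ht f hfcont hfC0) (hk0 t) hk_le⟩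
  rw [hkt]
  exact (hSF t ht f hfcont.measurable ⟨_, hf_bdd⟩).sub <|
    continuous_intervalIntegral_integral_kernel S (fun s hs => hMarkov s hs.le) hSF
      (fun s => hcmeas.mul (hk_meas (t - s))) (fun s => hck_bdd (t - s)) ht.le (hint t ht.le)

/-- Lemma 2.1(ii): on a locally compact Hausdorff space `F` with countable
base, if the strong Feller family of Markov kernels `(S_t)_{t>0}` moreover acts on
continuous functions vanishing at infinity (i.e. maps them to functions vanishing at
infinity), `c : F → [0,∞)` is bounded Borel measurable, `f : F → [0,∞)` is continuous,
bounded and vanishes at infinity, and `k` is the (jointly measurable, `0 ≤ k ≤ sup f`)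
solution of the killed Feynman–Kac integral equation
`k_t(x) = S_t f(x) − ∫₀ᵗ S_s(c · k_{t−s})(x) ds`, then for every `t > 0` the function `k_t`
is continuous and vanishes at infinity (tends to `0` along the cocompact filter). -/
theorem strongFeller_C0_preserved_by_killing
    {F : Type*} [TopologicalSpace F] [T2Space F] [LocallyCompactSpace F]
    [SecondCountableTopology F]
    [MeasurableSpace F] [BorelSpace F]
    (S : ℝ → Kernel F F)
    (hMarkov : ∀ t : ℝ, 0 ≤ t → IsMarkovKernel (S t))
    (hSF : ∀ t : ℝ, 0 < t → ∀ g : F → ℝ, Measurable g → (∃ M, ∀ x, |g x| ≤ M) →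
      Continuous fun x => ∫ z, g z ∂(S t x))
    (hC0 : ∀ t : ℝ, 0 < t → ∀ g : F → ℝ, Continuous g →
      Tendsto g (cocompact F) (𝓝 0) →
      Tendsto (fun x => ∫ z, g z ∂(S t x)) (cocompact F) (𝓝 0))
    (c : F → ℝ) (hcmeas : Measurable c) (hc0 : ∀ x, 0 ≤ c x) (hcbdd : ∃ M, ∀ x, c x ≤ M)
    (f : F → ℝ) (hfcont : Continuous f) (hf0 : ∀ x, 0 ≤ f x)
    (hfbdd : BddAbove (Set.range f))
    (hfC0 : Tendsto f (cocompact F) (𝓝 0))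
    (k : ℝ → F → ℝ)
    (hkmeas : Measurable fun p : ℝ × F => k p.1 p.2)
    (hk0 : ∀ t x, 0 ≤ k t x) (hkle : ∀ t x, k t x ≤ sSup (Set.range f))
    (hint : ∀ t : ℝ, 0 ≤ t → ∀ x : F,
      IntervalIntegrable (fun s => ∫ z, c z * k (t - s) z ∂(S s x)) volume 0 t)
    (heq : ∀ t : ℝ, 0 ≤ t → ∀ x : F,
      k t x = (∫ z, f z ∂(S t x)) - ∫ s in (0 : ℝ)..t, ∫ z, c z * k (t - s) z ∂(S s x)) :
    ∀ t : ℝ, 0 < t → Continuous (k t) ∧ Tendsto (k t) (cocompact F) (𝓝 0) :=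
  strongFeller_C0_preserved_by_killing_general S hMarkov hSF hC0 c hcmeas hc0 hcbdd f hfcont hf0
    hfbdd hfC0 k hkmeas hk0 hkle hint heq
end

section
/- Let φ be a flow on a topological space F, let C ⊆ F be a closed set, let τ(x) := inf{t ≥ 0 : φ_t(x) ∈ C} ∈ [0,∞] be the first entry time of C, and define the stopped flow Φ_t(x) := φ_{t ∧ τ(x)}(x) (with t ∧ ∞ = t). Then Φ is again a flow in the algebraic sense: Φ_0(x) = x and Φ_{t+s}(x) = Φ_t(Φ_s(x)) for all s, t ≥ 0 and all x ∈ F. -/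
open Filter Topology

/-- The first entry time of a set `C` by a family of maps `φ` indexed by nonnegative times,
valued in `[0,∞]` (`∞` if the trajectory never meets `C`). -/
noncomputable def entryTime {F : Type*} (φ : NNReal → F → F) (C : Set F) (x : F) : ENNReal :=
  sInf {s : ENNReal | ∃ t : NNReal, s = (t : ENNReal) ∧ φ t x ∈ C}

/-- The flow `φ` stopped at the set `C`: `Φ_t(x) = φ_{t ∧ τ(x)}(x)`, where `τ` is the first
entry time of `C` and `t ∧ ∞ = t`. -/
noncomputable def stoppedFlow {F : Type*} (φ : NNReal → F → F) (C : Set F)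
    (t : NNReal) (x : F) : F :=
  φ (min (t : ENNReal) (entryTime φ C x)).toNNReal x

/-! For `s ≤ τ(x)` the trajectory of `φ_s x` is the tail of that of `x`, so the semigroup law
alone gives `τ(φ_s x) = τ(x) - s`. Taking `r = s ∧ τ(x)`, so that `Φ_s x = φ_r x`, both
`Φ_{t+s} x` and `Φ_t (φ_r x)` become `φ` at time `(t + s) ∧ τ(x)`, by an identity in `[0,∞]`. -/

open scoped NNReal ENNReal

theorem min_tsub_min_add_min (a b c : ℝ≥0∞) :
    min a (c - min b c) + min b c = min (a + b) c := by
  rcases le_total b c with hbc | hcb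
  · rw [min_eq_left hbc, ← min_add_add_right, tsub_add_cancel_of_le hbc]
  · rw [min_eq_right hcb, tsub_self, min_eq_right zero_le, zero_add,
      min_eq_right (hcb.trans le_add_self)]

section entryTime

variable {F : Type*} {φ : ℝ≥0 → F → F} {C : Set F} {x : F}

theorem le_entryTime_iff {a : ℝ≥0∞} :
    a ≤ entryTime φ C x ↔ ∀ t : ℝ≥0, φ t x ∈ C → a ≤ t := by
  simp only [entryTime, le_sInf_iff, Set.mem_ofPred_eq]
  constructor
  · exact fun h t ht => h t ⟨t, rfl, ht⟩
  · rintro h _ ⟨t, rfl, ht⟩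
    exact h t ht

theorem entryTime_le_of_mem {t : ℝ≥0} (ht : φ t x ∈ C) : entryTime φ C x ≤ t :=
  le_entryTime_iff.1 le_rfl t ht

theorem entryTime_apply_eq_tsub (hφadd : ∀ s t : ℝ≥0, ∀ x, φ (t + s) x = φ t (φ s x))
    {s : ℝ≥0} (hs : (s : ℝ≥0∞) ≤ entryTime φ C x) :
    entryTime φ C (φ s x) = entryTime φ C x - s := by
  apply le_antisymm
  · rw [(ENNReal.cancel_of_ne ENNReal.coe_ne_top).le_tsub_iff_right hs, le_entryTime_iff]
    intro t ht
    have hst : s ≤ t := by exact_mod_cast hs.trans (entryTime_le_of_mem ht)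
    have hmem : φ (t - s) (φ s x) ∈ C := by rwa [← hφadd, tsub_add_cancel_of_le hst]
    calc entryTime φ C (φ s x) + s ≤ ((t - s : ℝ≥0) : ℝ≥0∞) + s := by
          gcongr
          exact entryTime_le_of_mem hmem
      _ = t := by rw [← ENNReal.coe_add, tsub_add_cancel_of_le hst]
  · rw [le_entryTime_iff]
    intro u hu
    rw [← hφadd] at hu
    rw [tsub_le_iff_right]
    exact_mod_cast entryTime_le_of_mem hu

end entryTime

theorem stoppedFlow_zero {F : Type*} {φ : ℝ≥0 → F → F} (hφ0 : ∀ x, φ 0 x = x) (C : Set F)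
    (x : F) : stoppedFlow φ C 0 x = x := by
  simp [stoppedFlow, hφ0]

theorem stoppedFlow_add {F : Type*} {φ : ℝ≥0 → F → F}
    (hφadd : ∀ s t : ℝ≥0, ∀ x, φ (t + s) x = φ t (φ s x)) (C : Set F) (s t : ℝ≥0) (x : F) :
    stoppedFlow φ C (t + s) x = stoppedFlow φ C t (stoppedFlow φ C s x) := by
  set τ := entryTime φ C x
  set r := min (s : ℝ≥0∞) τ
  have hr_ne_top : r ≠ ⊤ := ne_top_of_le_ne_top ENNReal.coe_ne_top (min_le_left _ _)
  have hr_le : (r.toNNReal : ℝ≥0∞) ≤ τ := by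
    rw [ENNReal.coe_toNNReal hr_ne_top]
    exact min_le_right _ _
  have hτr : entryTime φ C (φ r.toNNReal x) = τ - r := by
    rw [entryTime_apply_eq_tsub hφadd hr_le, ENNReal.coe_toNNReal hr_ne_top]
  have hmin_ne_top : min (t : ℝ≥0∞) (τ - r) ≠ ⊤ :=
    ne_top_of_le_ne_top ENNReal.coe_ne_top (min_le_left _ _)
  have hΦs : stoppedFlow φ C s x = φ r.toNNReal x := rfl
  rw [hΦs, stoppedFlow, stoppedFlow, hτr, ← hφadd, ← ENNReal.toNNReal_add hmin_ne_top hr_ne_top, min_tsub_min_add_min,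
    ENNReal.coe_add]

theorem stoppedFlow_is_flow_general {F : Type*}
    (φ : NNReal → F → F)
    (hφ0 : ∀ x, φ 0 x = x)
    (hφadd : ∀ s t : NNReal, ∀ x, φ (t + s) x = φ t (φ s x))
    (C : Set F) :
    (∀ x, stoppedFlow φ C 0 x = x) ∧
      (∀ s t : NNReal, ∀ x, stoppedFlow φ C (t + s) x
        = stoppedFlow φ C t (stoppedFlow φ C s x)) :=
  ⟨stoppedFlow_zero hφ0 C, stoppedFlow_add hφadd C⟩

/-- for a flow `φ` on a topological space `F` and a closed set `C`, the flow
stopped at the first entry time of `C` is again a flow in the algebraic sense: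
`Φ_0(x) = x` and `Φ_{t+s}(x) = Φ_t(Φ_s(x))`. -/
theorem stoppedFlow_is_flow {F : Type*} [TopologicalSpace F]
    (φ : NNReal → F → F)
    (hφ0 : ∀ x, φ 0 x = x)
    (hφadd : ∀ s t : NNReal, ∀ x, φ (t + s) x = φ t (φ s x))
    (hφcont : Continuous fun p : NNReal × F => φ p.1 p.2)
    (C : Set F) (hC : IsClosed C) :
    (∀ x, stoppedFlow φ C 0 x = x) ∧
      (∀ s t : NNReal, ∀ x, stoppedFlow φ C (t + s) x
        = stoppedFlow φ C t (stoppedFlow φ C s x)) :=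
  stoppedFlow_is_flow_general φ hφ0 hφadd C
end
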